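/- arXiv:2404.17717 — 3 statements merged into one kernel-verified Lean document; each statement's English description precedes it below -/
import Mathlib

section
/- Let f be a nonconstant univariate polynomial of degree d and K = [a_1,b_1] ∪ ... ∪ [a_m,b_m] a union of m compact intervals with a_l < b_l. Then f has at most 2m + ⌈(d-1)/2⌉ global minimizers on K. -/
/-- The set of global minimizers of a univariate polynomial `f` over `K`. -/
def globalMinSet (f : Polynomial ℝ) (K : Set ℝ) : Set ℝ :=
  {u ∈ K | ∀ x ∈ K, Polynomial.eval u f ≤ Polynomial.eval x f}

theorem stmt_6 {m : ℕ} (f : Polynomial ℝ) (d : ℕ) (hd : f.natDegree = d) (hd1 : 1 ≤ d)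
    (a b : Fin m → ℝ) (hab : ∀ l, a l < b l) :
    (globalMinSet f (⋃ l, Set.Icc (a l) (b l))).Finite ∧
      ((globalMinSet f (⋃ l, Set.Icc (a l) (b l))).ncard : ℤ) ≤
        2 * m + ⌈((d : ℝ) - 1) / 2⌉ := by
  set K := ⋃ l, Set.Icc (a l) (b l) with hK
  set S := globalMinSet f K with hSdef
  have hceil : ((d / 2 : ℕ) : ℤ) ≤ ⌈((d : ℝ) - 1) / 2⌉ := by
    set k := d / 2 with hk
    have hk2 : 2 * k ≤ d := Nat.mul_div_le d 2
    have : (((k : ℤ) - 1 : ℤ) : ℝ) < ((d : ℝ) - 1) / 2 := by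
      rw [lt_div_iff₀ (by norm_num : (0:ℝ) < 2)]
      have : (k : ℝ) * 2 ≤ d := by
        rw [mul_comm]; exact_mod_cast hk2
      push_cast
      linarith
    have := Int.lt_ceil.mpr this
    omega
  have hkd : 2 * (d / 2) ≤ d := Nat.mul_div_le d 2
  rcases Set.eq_empty_or_nonempty S with hS | ⟨u₀, hu₀⟩
  · constructor
    · rw [hS]; exact Set.finite_empty
    · rw [hS]
      simp only [Set.ncard_empty, Nat.cast_zero]
      have h0 : (0 : ℤ) ≤ ((d / 2 : ℕ) : ℤ) := Int.natCast_nonneg _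
      have hm : (0 : ℤ) ≤ (m : ℤ) := Int.natCast_nonneg _
      linarith
  · set c := Polynomial.eval u₀ f with hc
    set g := f - Polynomial.C c with hg
    have hgdeg : g.natDegree = d := by rw [hg, Polynomial.natDegree_sub_C, hd]
    have hgne : g ≠ 0 := by
      intro h; rw [h] at hgdeg; simp at hgdeg; omega
    have hroot : ∀ u ∈ S, g.IsRoot u := by
      intro u hu
      have h1 := hu.2 u₀ hu₀.1
      have h2 := hu₀.2 u hu.1
      simp [hg, Polynomial.IsRoot, hc]
      linarith
    have hsub : S ⊆ ↑g.roots.toFinset := by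
      intro u hu
      rw [Finset.mem_coe, Multiset.mem_toFinset, Polynomial.mem_roots hgne]
      exact hroot u hu
    have hfin : S.Finite := Set.Finite.subset (g.roots.toFinset.finite_toSet) hsub
    refine ⟨hfin, ?_⟩
    -- endpoint finset
    set E : Finset ℝ := Finset.image a Finset.univ ∪ Finset.image b Finset.univ with hE
    have hEcard : E.card ≤ 2 * m := by
      calc E.card ≤ (Finset.image a Finset.univ).card + (Finset.image b Finset.univ).card :=
            Finset.card_union_le _ _
        _ ≤ m + m := by
            gcongr <;> simpa using Finset.card_image_le.trans (by simp)
        _ = 2 * m := by ring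
    set F := hfin.toFinset with hF
    set I := F \ E with hI
    -- interior minimizers have multiplicity ≥ 2
    have hmult : ∀ u ∈ I, 2 ≤ Multiset.count u g.roots := by
      intro u huI
      rw [Finset.mem_sdiff, Set.Finite.mem_toFinset] at huI
      obtain ⟨huS, huE⟩ := huI
      obtain ⟨l, hl⟩ : ∃ l, u ∈ Set.Icc (a l) (b l) := by
        simpa [hK] using huS.1
      have hne_a : u ≠ a l := fun h => huE (by simp [hE]; exact Or.inl ⟨l, h.symm⟩)
      have hne_b : u ≠ b l := fun h => huE (by simp [hE]; exact Or.inr ⟨l, h.symm⟩)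
      have hIoo : u ∈ Set.Ioo (a l) (b l) :=
        ⟨lt_of_le_of_ne hl.1 (Ne.symm hne_a), lt_of_le_of_ne hl.2 hne_b⟩
      have hmin : IsLocalMin (fun x => Polynomial.eval x f) u := by
        have hnhds : Set.Ioo (a l) (b l) ∈ nhds u := Ioo_mem_nhds hIoo.1 hIoo.2
        filter_upwards [hnhds] with x hx
        exact huS.2 x (Set.mem_iUnion.mpr ⟨l, Set.Ioo_subset_Icc_self hx⟩)
      have hderiv : Polynomial.eval u (Polynomial.derivative f) = 0 := by
        have := hmin.deriv_eq_zero
        rwa [Polynomial.deriv] at this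
      have h2 : 1 < g.rootMultiplicity u := by
        rw [Polynomial.one_lt_rootMultiplicity_iff_isRoot hgne]
        refine ⟨hroot u huS, ?_⟩
        simp [hg, Polynomial.IsRoot, hderiv]
      rw [Polynomial.count_roots]
      omega
    have hIsub : I ⊆ g.roots.toFinset := fun u hu => by
      have : u ∈ S := by
        have := (Finset.mem_sdiff.mp hu).1
        rwa [Set.Finite.mem_toFinset] at this
      exact hsub this
    have hIcard : 2 * I.card ≤ d := by
      calc 2 * I.card = ∑ u ∈ I, 2 := by simp [mul_comm]
        _ ≤ ∑ u ∈ I, Multiset.count u g.roots := Finset.sum_le_sum hmult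
        _ ≤ ∑ u ∈ g.roots.toFinset, Multiset.count u g.roots :=
            Finset.sum_le_sum_of_subset hIsub
        _ = Multiset.card g.roots := g.roots.toFinset_sum_count_eq
        _ ≤ g.natDegree := g.card_roots'
        _ = d := hgdeg
    have hFcard : F.card ≤ 2 * m + d / 2 := by
      calc F.card ≤ (F ∩ E).card + I.card := by
            rw [hI]; exact (Finset.card_le_card (by intro x hx; by_cases h : x ∈ E <;> simp [h, hx])).trans
              (Finset.card_union_le _ _)
        _ ≤ E.card + I.card := by gcongr; exact Finset.inter_subset_right
        _ ≤ 2 * m + d / 2 := by omega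
    have hncard : S.ncard = F.card := Set.ncard_eq_toFinset_card S hfin
    rw [hncard]
    have h1 : (F.card : ℤ) ≤ 2 * m + ((d / 2 : ℕ) : ℤ) := by exact_mod_cast hFcard
    linarith
end

section
/- Let h ∈ ℝ[x] be a univariate polynomial of odd degree d = 2d₀+1 that is nonnegative on [a,b] with a < b. Then there exist polynomials p, q ∈ ℝ[x] of degree at most d₀ such that h = (x-a)·p² + (b-x)·q². -/
/-!
The substitution `x = (a + b t) / (1 + t)` turns `h` into a polynomial `P` of degree at most `d`
that is nonnegative on `[0, ∞)`. Every such `P` has the form `F ^ 2 + t G ^ 2`: it factors into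
`t - r` with `r ≤ 0`, squares `(t - r) ^ 2` at its positive roots (which are double), and
quadratics without real roots, each of this form, and the form is multiplicative, being a norm
from `ℝ[t][√-t]`. As `F ^ 2` and `t G ^ 2` have positive leading coefficients, `2 deg F ≤ d` and
`2 deg G + 1 ≤ d`. Undoing the substitution, `t = (x - a) / (b - x)`, and clearing denominators
with `(b - x) ^ d₀` gives `p` and `q`.
-/

theorem Continuous.nonneg_of_forall_pos_ne {f : ℝ → ℝ} (hf : Continuous f) {r : ℝ}
    (h : ∀ x, 0 < x → x ≠ r → 0 ≤ f x) {x : ℝ} (hx : 0 ≤ x) : 0 ≤ f x := by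
  have hsub : Set.Ici 0 ⊆ closure (Set.Ioi 0 ∩ {r}ᶜ) := by
    rw [← closure_Ioi]
    exact closure_minimal ((dense_compl_singleton r).open_subset_closure_inter isOpen_Ioi)
      isClosed_closure
  exact closure_minimal (fun y hy => h y hy.1 hy.2) (isClosed_le continuous_const hf) (hsub hx)

namespace Polynomial

section Homogenize

variable {R : Type*} [CommRing R]

/-- `vⁿ · p(u / v)` with the denominators cleared, for `p` of degree at most `n`. -/
noncomputable def homogenizeComp (p : R[X]) (n : ℕ) (u v : R[X]) : R[X] :=
  ∑ i ∈ Finset.range (n + 1), C (p.coeff i) * u ^ i * v ^ (n - i)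

theorem natDegree_homogenizeComp_le (p : R[X]) (n : ℕ) {u v : R[X]}
    (hu : u.natDegree ≤ 1) (hv : v.natDegree ≤ 1) : (homogenizeComp p n u v).natDegree ≤ n := by
  refine natDegree_sum_le_of_forall_le _ _ fun i hi => ?_
  have hi : i ≤ n := Nat.lt_succ_iff.mp (Finset.mem_range.mp hi)
  have hu' : (u ^ i).natDegree ≤ i :=
    natDegree_pow_le.trans (by simpa using Nat.mul_le_mul_left i hu)
  have hv' : (v ^ (n - i)).natDegree ≤ n - i :=
    natDegree_pow_le.trans (by simpa using Nat.mul_le_mul_left (n - i) hv)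
  calc (C (p.coeff i) * u ^ i * v ^ (n - i)).natDegree
      ≤ (C (p.coeff i) * u ^ i).natDegree + (v ^ (n - i)).natDegree := natDegree_mul_le
    _ ≤ i + (n - i) := add_le_add (natDegree_C_mul_le _ _ |>.trans hu') hv'
    _ = n := Nat.add_sub_cancel' hi

theorem eval_homogenizeComp {K : Type*} [Field K] {p : K[X]} {n : ℕ} (hp : p.natDegree ≤ n)
    (u v : K[X]) {x : K} (hx : v.eval x ≠ 0) :
    (homogenizeComp p n u v).eval x = v.eval x ^ n * p.eval (u.eval x / v.eval x) := by
  rw [homogenizeComp, eval_finsetSum, eval_eq_sum_range' (Nat.lt_succ_of_le hp), Finset.mul_sum]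
  refine Finset.sum_congr rfl fun i hi => ?_
  have hi : i ≤ n := Nat.lt_succ_iff.mp (Finset.mem_range.mp hi)
  simp only [eval_mul, eval_pow, eval_C, div_pow]
  rw [← Nat.sub_add_cancel hi, pow_add, Nat.add_sub_cancel]
  field_simp

end Homogenize

/-- The norms from `R[X][√-X]`. -/
def sqAddXMulSq (R : Type*) [CommRing R] : Submonoid R[X] where
  carrier := {P | ∃ F G : R[X], P = F ^ 2 + X * G ^ 2}
  one_mem' := ⟨1, 0, by ring⟩
  mul_mem' := by
    rintro _ _ ⟨F₁, G₁, rfl⟩ ⟨F₂, G₂, rfl⟩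
    exact ⟨F₁ * F₂ - X * G₁ * G₂, F₁ * G₂ + G₁ * F₂, by ring⟩

theorem natDegree_le_of_natDegree_sq_add_X_mul_sq_le {R : Type*} [CommRing R] [LinearOrder R]
    [IsStrictOrderedRing R] {F G : R[X]} {n : ℕ}
    (h : (F ^ 2 + X * G ^ 2).natDegree ≤ 2 * n + 1) : F.natDegree ≤ n ∧ G.natDegree ≤ n := by
  rcases eq_or_ne G 0 with rfl | hG
  · simp only [ne_eq, OfNat.ofNat_ne_zero, not_false_eq_true, zero_pow, mul_zero, add_zero,
      natDegree_pow] at h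
    exact ⟨by omega, by simp⟩
  have hlc : (F ^ 2).leadingCoeff + (X * G ^ 2).leadingCoeff ≠ 0 := by
    rw [leadingCoeff_mul, leadingCoeff_X, one_mul, leadingCoeff_pow, leadingCoeff_pow]
    have : 0 < G.leadingCoeff ^ 2 := sq_pos_of_ne_zero (leadingCoeff_ne_zero.mpr hG)
    exact (add_pos_of_nonneg_of_pos (sq_nonneg _) this).ne'
  have hdeg := degree_add_eq_of_leadingCoeff_add_ne_zero hlc
  have hF := natDegree_le_natDegree (le_max_left _ _ |>.trans_eq hdeg.symm)
  have hG' := natDegree_le_natDegree (le_max_right _ _ |>.trans_eq hdeg.symm)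
  rw [natDegree_pow] at hF
  rw [natDegree_X_mul (pow_ne_zero _ hG), natDegree_pow] at hG'
  omega

theorem sq_X_sub_C_dvd_of_isLocalMin {P : ℝ[X]} {r : ℝ} (hr : P.IsRoot r)
    (hmin : IsLocalMin P.eval r) : (X - C r) ^ 2 ∣ P := by
  rcases eq_or_ne P 0 with rfl | hP
  · exact dvd_zero _
  rw [← le_rootMultiplicity_iff hP]
  exact (one_lt_rootMultiplicity_iff_isRoot hP).2
    ⟨hr, by simpa [Polynomial.deriv] using hmin.deriv_eq_zero⟩

theorem exists_sqAddXMulSq_dvd_of_isRoot {P : ℝ[X]} (hP : ∀ x, 0 ≤ x → 0 ≤ P.eval x) {r : ℝ}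
    (hr : P.IsRoot r) : ∃ M ∈ sqAddXMulSq ℝ, 0 < M.natDegree ∧ M ∣ P ∧
      ∀ x, 0 < x → x ≠ r → 0 < M.eval x := by
  rcases le_or_gt r 0 with hr0 | hr0
  · refine ⟨X - C r, ⟨C √(-r), 1, ?_⟩, by simp, dvd_iff_isRoot.mpr hr, fun x hx _ => ?_⟩
    · rw [← C_pow, Real.sq_sqrt (neg_nonneg.mpr hr0), C_neg]
      ring
    · simp only [eval_sub, eval_X, eval_C]
      linarith
  · have hmin : IsLocalMin P.eval r :=
      Filter.eventually_of_mem (Ioi_mem_nhds hr0) fun x hx => by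
        simpa [hr.eq_zero] using hP x (le_of_lt hx)
    refine ⟨(X - C r) ^ 2, ⟨X - C r, 0, by ring⟩, by simp, sq_X_sub_C_dvd_of_isLocalMin hr hmin,
      fun x _ hxr => ?_⟩
    simpa using sq_pos_of_ne_zero (sub_ne_zero.mpr hxr)

theorem exists_sqAddXMulSq_dvd_of_aeval_eq_zero {P : ℝ[X]} {z : ℂ} (hz : aeval z P = 0)
    (him : z.im ≠ 0) :
    ∃ M ∈ sqAddXMulSq ℝ, 0 < M.natDegree ∧ M ∣ P ∧ ∀ x, 0 < M.eval x := by
  refine ⟨X ^ 2 - C (2 * z.re) * X + C (‖z‖ ^ 2), ⟨X - C ‖z‖, C √(2 * ‖z‖ - 2 * z.re), ?_⟩,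
    ?_, quadratic_dvd_of_aeval_eq_zero_im_ne_zero P hz him, fun x => ?_⟩
  · rw [← C_pow, Real.sq_sqrt (by linarith [Complex.re_le_norm z])]
    simp only [map_sub, map_mul, map_pow, map_ofNat]
    ring
  · have : (X ^ 2 - C (2 * z.re) * X + C (‖z‖ ^ 2)).natDegree = 2 := by compute_degree!
    omega
  · have : ‖z‖ ^ 2 = z.re ^ 2 + z.im ^ 2 := by rw [Complex.sq_norm, Complex.normSq_apply]; ring
    simp only [eval_add, eval_sub, eval_mul, eval_pow, eval_X, eval_C, this]
    nlinarith [sq_nonneg (x - z.re), sq_pos_of_ne_zero him]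

theorem exists_sqAddXMulSq_dvd_of_nonneg {P : ℝ[X]} (hP : ∀ x, 0 ≤ x → 0 ≤ P.eval x)
    (hdeg : 0 < P.natDegree) : ∃ M ∈ sqAddXMulSq ℝ, 0 < M.natDegree ∧ M ∣ P ∧
      ∃ r, ∀ x, 0 < x → x ≠ r → 0 < M.eval x := by
  obtain ⟨z, hz⟩ := Complex.exists_root <| by
    rwa [degree_map_eq_of_injective (algebraMap ℝ ℂ).injective, ← natDegree_pos_iff_degree_pos]
  have hz : aeval z P = 0 := by rwa [aeval_def, ← eval_map]
  by_cases him : z.im = 0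
  · have hr : P.IsRoot z.re := by
      rwa [← Complex.re_add_im z, him, Complex.ofReal_zero, zero_mul, add_zero,
        ← Complex.coe_algebraMap, aeval_algebraMap_apply_eq_algebraMap_eval,
        Complex.coe_algebraMap, Complex.ofReal_eq_zero] at hz
    obtain ⟨M, hM, hMdeg, hMP, hMpos⟩ := exists_sqAddXMulSq_dvd_of_isRoot hP hr
    exact ⟨M, hM, hMdeg, hMP, z.re, hMpos⟩
  · obtain ⟨M, hM, hMdeg, hMP, hMpos⟩ := exists_sqAddXMulSq_dvd_of_aeval_eq_zero hz him
    exact ⟨M, hM, hMdeg, hMP, 0, fun x _ _ => hMpos x⟩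

theorem mem_sqAddXMulSq_of_nonneg {P : ℝ[X]} (hP : ∀ x, 0 ≤ x → 0 ≤ P.eval x) :
    P ∈ sqAddXMulSq ℝ := by
  induction hn : P.natDegree using Nat.strong_induction_on generalizing P with
  | _ n ih =>
  rcases Nat.eq_zero_or_pos n with rfl | hpos
  · refine ⟨C √(P.eval 0), 0, ?_⟩
    rw [← C_pow, Real.sq_sqrt (hP 0 le_rfl), ← coeff_zero_eq_eval_zero,
      ← eq_C_of_natDegree_eq_zero hn]
    ring
  obtain ⟨M, hM, hMdeg, ⟨Q, rfl⟩, r, hMpos⟩ := exists_sqAddXMulSq_dvd_of_nonneg hP (hn ▸ hpos)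
  have hQ : ∀ x, 0 ≤ x → 0 ≤ Q.eval x := fun x =>
    Q.continuous.nonneg_of_forall_pos_ne fun y hy hyr =>
      (mul_nonneg_iff_of_pos_left (hMpos y hy hyr)).mp (by simpa using hP y hy.le)
  have hM0 : M ≠ 0 := by rintro rfl; simp at hMdeg
  have hQ0 : Q ≠ 0 := by rintro rfl; rw [mul_zero, natDegree_zero] at hn; omega
  rw [natDegree_mul hM0 hQ0] at hn
  exact mul_mem hM (ih _ (by omega) hQ rfl)

theorem exists_nonneg_Ici_of_nonneg_Icc {h : ℝ[X]} {d : ℕ} (hd : h.natDegree ≤ d) {a b : ℝ}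
    (hab : a < b) (hpos : ∀ x ∈ Set.Icc a b, 0 ≤ h.eval x) :
    ∃ P : ℝ[X], P.natDegree ≤ d ∧ (∀ t, 0 ≤ t → 0 ≤ P.eval t) ∧
      ∀ x ∈ Set.Ioo a b, h.eval x = (b - x) ^ d * P.eval ((x - a) / (b - x)) := by
  -- `t ↦ (a + b t) / (1 + t)` maps `[0, ∞)` onto `[a, b)`, and `(1 + t) / (b - a) = 1 / (b - x)`
  set u : ℝ[X] := C (b - a)⁻¹ * (C b * X + C a)
  set v : ℝ[X] := C (b - a)⁻¹ * (X + 1)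
  have hba : 0 < b - a := sub_pos.mpr hab
  have hv : ∀ t, 0 ≤ t → 0 < v.eval t := fun t ht => by
    simp only [v, eval_mul, eval_C, eval_add, eval_X, eval_one]; positivity
  have huv : ∀ t, 0 ≤ t → u.eval t / v.eval t = (b * t + a) / (t + 1) := fun t ht => by
    simp only [u, v, eval_mul, eval_C, eval_add, eval_X, eval_one]
    exact mul_div_mul_left _ _ (by positivity)
  refine ⟨homogenizeComp h d u v,
    natDegree_homogenizeComp_le h d (by simp only [u]; compute_degree!)
      (by simp only [v]; compute_degree!),
    fun t ht => ?_, fun x ⟨hax, hxb⟩ => ?_⟩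
  · rw [eval_homogenizeComp hd u v (hv t ht).ne', huv t ht]
    refine mul_nonneg (pow_nonneg (hv t ht).le _) (hpos _ ⟨?_, ?_⟩)
    · rw [le_div_iff₀ (by positivity)]; nlinarith
    · rw [div_le_iff₀ (by positivity)]; nlinarith
  · have ht : 0 ≤ (x - a) / (b - x) := div_nonneg (by linarith) (by linarith)
    have hbx : b - x ≠ 0 := by linarith
    have hx : (b * ((x - a) / (b - x)) + a) / ((x - a) / (b - x) + 1) = x := by
      field_simp; ring
    have hvx : (b - x) * v.eval ((x - a) / (b - x)) = 1 := by
      simp only [v, eval_mul, eval_C, eval_add, eval_X, eval_one]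
      field_simp; ring
    rw [eval_homogenizeComp hd u v (hv _ ht).ne', huv _ ht, hx, ← mul_assoc, ← mul_pow, hvx,
      one_pow, one_mul]

end Polynomial

open Polynomial in
theorem stmt_7 (h : Polynomial ℝ) (d₀ : ℕ) (hdeg : h.natDegree = 2 * d₀ + 1)
    (a b : ℝ) (hab : a < b) (hpos : ∀ x ∈ Set.Icc a b, 0 ≤ h.eval x) :
    ∃ p q : Polynomial ℝ, p.degree ≤ d₀ ∧ q.degree ≤ d₀ ∧
      h = (X - C a) * p ^ 2 + (C b - X) * q ^ 2 := by
  obtain ⟨P, hPdeg, hP, hhP⟩ := exists_nonneg_Ici_of_nonneg_Icc hdeg.le hab hpos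
  obtain ⟨F, G, rfl⟩ := mem_sqAddXMulSq_of_nonneg hP
  obtain ⟨hF, hG⟩ := natDegree_le_of_natDegree_sq_add_X_mul_sq_le hPdeg
  have hdeg₁ : ∀ c : ℝ, (X - C c).natDegree ≤ 1 ∧ (C c - X).natDegree ≤ 1 := fun c =>
    ⟨by compute_degree!, by compute_degree!⟩
  refine ⟨homogenizeComp G d₀ (X - C a) (C b - X), homogenizeComp F d₀ (X - C a) (C b - X),
    natDegree_le_iff_degree_le.mp (natDegree_homogenizeComp_le _ _ (hdeg₁ a).1 (hdeg₁ b).2),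
    natDegree_le_iff_degree_le.mp (natDegree_homogenizeComp_le _ _ (hdeg₁ a).1 (hdeg₁ b).2),
    eq_of_infinite_eval_eq _ _ ((Set.Ioo_infinite hab).mono fun x hx => ?_)⟩
  have hbx : (C b - X).eval x ≠ 0 := by simp only [eval_sub, eval_C, eval_X]; linarith [hx.2]
  simp only [Set.mem_ofPred_eq, eval_add, eval_mul, eval_pow, eval_homogenizeComp hF _ _ hbx,
    eval_homogenizeComp hG _ _ hbx, hhP x hx]
  simp only [eval_sub, eval_C, eval_X] at hbx ⊢
  field_simp
  ring
end

section
/- Let h ∈ ℝ[x] be a univariate polynomial of even degree d = 2d₀ that is nonnegative on [a,b] with a < b. Then there exist polynomials p of degree at most d₀ and q of degree at most d₀-1 such that h = p² + (x-a)(b-x)·q². -/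
/-!
Write `w = (X - a)(b - X)`. Representations `p² + w q²` are multiplicative, by
`(p₁² + w q₁²)(p₂² + w q₂²) = (p₁p₂ - w q₁q₂)² + w (p₁q₂ + q₁p₂)²`, and the degree bounds add up.
So it suffices to split off from `h` a quadratic factor with such a representation; that factor is
nonnegative on `[a, b]`, hence so is the cofactor, and induction applies. The factor is `(X - r)²`
for a root `r ∈ (a, b)` (necessarily a double root), else `±(X - r)(X - s)` for two real roots
outside `(a, b)` (the second exists since `h / (X - r)` has odd degree), else an irreducible
quadratic, positive everywhere.
-/

open Polynomial Set

def LukacsRep (a b : ℝ) (d : ℕ) (h : ℝ[X]) : Prop :=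
  ∃ p q : ℝ[X], p.degree ≤ d ∧ q.degree < d ∧ h = p ^ 2 + (X - C a) * (C b - X) * q ^ 2

lemma degree_mul_lt_of_le_of_lt {R : Type*} [Semiring R] [NoZeroDivisors R] {p q : R[X]}
    {m n : ℕ} (hp : p.degree ≤ m) (hq : q.degree < n) : (p * q).degree < ↑(m + n) := by
  rcases eq_or_ne p 0 with rfl | hp0
  · simp
  · rw [degree_mul, Nat.cast_add]
    exact WithBot.add_lt_add_of_le_of_lt (degree_ne_bot.mpr hp0) hp hq

namespace LukacsRep

variable {a b : ℝ}

lemma C_of_nonneg {c : ℝ} (hc : 0 ≤ c) : LukacsRep a b 0 (C c) :=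
  ⟨C √c, 0, degree_C_le, by simp, by rw [← C_pow, Real.sq_sqrt hc]; ring⟩

lemma sq_X_sub_C (r : ℝ) : LukacsRep a b 1 ((X - C r) ^ 2) :=
  ⟨X - C r, 0, by rw [degree_X_sub_C]; rfl, by simp, by ring⟩

lemma nonneg {d : ℕ} {h : ℝ[X]} (hh : LukacsRep a b d h) : ∀ x ∈ Icc a b, 0 ≤ h.eval x := by
  obtain ⟨p, q, -, -, rfl⟩ := hh
  rintro x ⟨hax, hxb⟩
  have : 0 ≤ (x - a) * (b - x) := mul_nonneg (sub_nonneg.2 hax) (sub_nonneg.2 hxb)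
  simp only [eval_add, eval_mul, eval_pow, eval_sub, eval_X, eval_C]
  positivity

lemma mul {m n : ℕ} {f g : ℝ[X]} (hf : LukacsRep a b m f) (hg : LukacsRep a b n g) :
    LukacsRep a b (m + n) (f * g) := by
  obtain ⟨p₁, q₁, hp₁, hq₁, rfl⟩ := hf
  obtain ⟨p₂, q₂, hp₂, hq₂, rfl⟩ := hg
  refine ⟨p₁ * p₂ - (X - C a) * (C b - X) * (q₁ * q₂), p₁ * q₂ + q₁ * p₂, ?_, ?_, by ring⟩
  · have hw : ((X - C a) * (C b - X) : ℝ[X]).degree = 1 + 1 := by compute_degree!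
    refine (degree_sub_le _ _).trans (max_le (by push_cast; exact degree_mul_le_of_le hp₁ hp₂) ?_)
    calc ((X - C a) * (C b - X) * (q₁ * q₂)).degree = (q₁.degree + 1) + (q₂.degree + 1) := by
          rw [degree_mul (p := (X - C a) * (C b - X)), hw, degree_mul]; abel
      _ ≤ ↑(m + n) := by
          push_cast
          exact add_le_add (Nat.WithBot.add_one_le_of_lt hq₁) (Nat.WithBot.add_one_le_of_lt hq₂)
  · refine (degree_add_le _ _).trans_lt (max_lt (degree_mul_lt_of_le_of_lt hp₁ hq₂) ?_)
    rw [mul_comm, add_comm m]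
    exact degree_mul_lt_of_le_of_lt hp₂ hq₁

end LukacsRep

lemma eval_eq_of_degree_le_two {R : Type*} [CommSemiring R] {Q : R[X]} (hQ : Q.degree ≤ 2)
    (x : R) : Q.eval x = Q.coeff 2 * x ^ 2 + Q.coeff 1 * x + Q.coeff 0 := by
  conv_lhs => rw [eq_quadratic_of_degree_le_two hQ]
  simp

lemma lukacsRep_one_of_eval_eq_sq {a b u v : ℝ} (hab : a ≠ b) {Q : ℝ[X]} (hQ : Q.degree ≤ 2)
    (hu : Q.eval a = u ^ 2) (hv : Q.eval b = v ^ 2)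
    (hlead : Q.coeff 2 * (b - a) ^ 2 ≤ (u + v) ^ 2) : LukacsRep a b 1 Q := by
  have hba : b - a ≠ 0 := sub_ne_zero.2 hab.symm
  -- `p` interpolates `u` at `a` and `-v` at `b`, so `Q - p²` vanishes at `a` and `b`
  -- and is `κ (X - a)(b - X)`; `hlead` says exactly that `κ ≥ 0`.
  set κ := ((u + v) / (b - a)) ^ 2 - Q.coeff 2 with hκ
  have hκ0 : 0 ≤ κ := by
    rw [hκ, div_pow, sub_nonneg, le_div_iff₀ (by positivity)]
    exact hlead
  refine ⟨C (u / (b - a)) * (C b - X) - C (v / (b - a)) * (X - C a), C √κ,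
    by compute_degree!, degree_C_le.trans_lt (by norm_num), ?_⟩
  refine Polynomial.funext fun x => ?_
  rw [eval_eq_of_degree_le_two hQ] at hu hv ⊢
  simp only [eval_add, eval_mul, eval_pow, eval_sub, eval_X, eval_C]
  rw [Real.sq_sqrt hκ0, hκ]
  field_simp
  linear_combination (b - x) * (b - a) * hu + (x - a) * (b - a) * hv

lemma lukacsRep_one_of_pos {a b : ℝ} (hab : a < b) {Q : ℝ[X]} (hQ : Q.degree ≤ 2)
    (hnonneg : ∀ x ∈ Icc a b, 0 ≤ Q.eval x) (ha : 0 < Q.eval a) (hb : 0 < Q.eval b) :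
    LukacsRep a b 1 Q := by
  set u := √(Q.eval a)
  set v := √(Q.eval b)
  have hu : 0 < u := Real.sqrt_pos.2 ha
  have hv : 0 < v := Real.sqrt_pos.2 hb
  have hu2 : Q.eval a = u ^ 2 := (Real.sq_sqrt ha.le).symm
  have hv2 : Q.eval b = v ^ 2 := (Real.sq_sqrt hb.le).symm
  refine lukacsRep_one_of_eval_eq_sq hab.ne hQ hu2 hv2 ?_
  -- `Q(t) ≥ 0` at the point `t` dividing `[a, b]` in the ratio `u : v` is the required bound.
  set t := (v * a + u * b) / (u + v)
  have ht : t ∈ Icc a b := by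
    constructor
    · rw [le_div_iff₀ (by positivity)]; nlinarith
    · rw [div_le_iff₀ (by positivity)]; nlinarith
  have key : (u + v) ^ 2 * Q.eval t = u * v * ((u + v) ^ 2 - Q.coeff 2 * (b - a) ^ 2) := by
    rw [eval_eq_of_degree_le_two hQ] at hu2 hv2 ⊢
    simp only [t]
    field_simp
    linear_combination (u + v) * v * hu2 + (u + v) * u * hv2
  have := key ▸ mul_nonneg (sq_nonneg (u + v)) (hnonneg t ht)
  exact sub_nonneg.1 (nonneg_of_mul_nonneg_right this (mul_pos hu hv))

lemma lukacsRep_one_X_sub_C_mul_X_sub_C_or_neg {a b r s : ℝ} (hab : a < b) (hr : r ∉ Ioo a b)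
    (hs : s ∉ Ioo a b) :
    LukacsRep a b 1 ((X - C r) * (X - C s)) ∨ LukacsRep a b 1 (-((X - C r) * (X - C s))) := by
  have of_sqrt (P : ℝ[X]) (hP : P.degree ≤ 2) (ha : 0 ≤ P.eval a) (hb : 0 ≤ P.eval b)
      (hlead : P.coeff 2 * (b - a) ^ 2 ≤ (√(P.eval a) + √(P.eval b)) ^ 2) : LukacsRep a b 1 P :=
    lukacsRep_one_of_eval_eq_sq hab.ne hP (Real.sq_sqrt ha).symm (Real.sq_sqrt hb).symm hlead
  have hQ : ((X - C r) * (X - C s)).degree ≤ 2 := by compute_degree!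
  have hcoeff : ((X - C r) * (X - C s)).coeff 2 = 1 := by simp [coeff_mul_X_sub_C, coeff_X]
  have same_side (ha : 0 ≤ (a - r) * (a - s)) (hb : 0 ≤ (b - r) * (b - s))
      (hfar : (b - a) ^ 2 ≤ (a - r) * (a - s) ∨ (b - a) ^ 2 ≤ (b - r) * (b - s)) :
      LukacsRep a b 1 ((X - C r) * (X - C s)) := by
    refine of_sqrt _ hQ ?_ ?_ ?_ <;> simp only [eval_mul, eval_sub, eval_X, eval_C, hcoeff]
    · exact ha
    · exact hb
    · have := Real.sq_sqrt ha
      have := Real.sq_sqrt hb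
      have := Real.sqrt_nonneg ((a - r) * (a - s))
      have := Real.sqrt_nonneg ((b - r) * (b - s))
      rcases hfar with hfar | hfar <;> nlinarith
  have opposite_sides (ha : (a - r) * (a - s) ≤ 0) (hb : (b - r) * (b - s) ≤ 0) :
      LukacsRep a b 1 (-((X - C r) * (X - C s))) := by
    refine of_sqrt _ (by rwa [degree_neg]) ?_ ?_ ?_ <;>
      simp only [eval_neg, eval_mul, eval_sub, eval_X, eval_C, coeff_neg, hcoeff]
    · linarith
    · linarith
    · nlinarith [sq_nonneg (√(-((a - r) * (a - s))) + √(-((b - r) * (b - s))))]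
  rw [mem_Ioo, not_and_or, not_lt, not_lt] at hr hs
  rcases hr with hr | hr <;> rcases hs with hs | hs
  · exact .inl (same_side (by nlinarith) (by nlinarith) (.inr (by nlinarith)))
  · exact .inr (opposite_sides (by nlinarith) (by nlinarith))
  · exact .inr (opposite_sides (by nlinarith) (by nlinarith))
  · exact .inl (same_side (by nlinarith) (by nlinarith) (.inl (by nlinarith)))

lemma sq_X_sub_C_dvd_of_nonneg_on_Icc {a b r : ℝ} {h : ℝ[X]} (hh : h ≠ 0)
    (hpos : ∀ x ∈ Icc a b, 0 ≤ h.eval x) (hr : r ∈ Ioo a b) (hroot : h.IsRoot r) :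
    (X - C r) ^ 2 ∣ h := by
  have hmin : IsLocalMin (fun x => h.eval x) r :=
    Filter.mem_of_superset (Icc_mem_nhds hr.1 hr.2) fun x hx => by
      simpa [hroot.eq_zero] using hpos x hx
  have hderiv : h.derivative.IsRoot r := by simpa using hmin.deriv_eq_zero
  rw [← le_rootMultiplicity_iff hh]
  exact (one_lt_rootMultiplicity_iff_isRoot hh).2 ⟨hroot, hderiv⟩

lemma exists_isRoot_of_odd_natDegree {g : ℝ[X]} (hg : Odd g.natDegree) : ∃ x, g.IsRoot x := by
  have hlc : g.leadingCoeff ≠ 0 := leadingCoeff_ne_zero.2 (by rintro rfl; simp at hg)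
  -- `g(x) g(-x)` has leading coefficient `-lc(g)²`, so `g` changes sign on `[-x, x]` for large `x`
  set F := g * g.comp (-X)
  have hFlc : F.leadingCoeff < 0 := by
    rw [leadingCoeff_mul, comp_neg_X_leadingCoeff_eq, hg.neg_one_pow]
    nlinarith [sq_pos_of_ne_zero hlc]
  have hFdeg : 0 < F.degree := by
    rw [← natDegree_pos_iff_degree_pos,
      natDegree_mul' (by rw [← leadingCoeff_mul]; exact hFlc.ne), natDegree_comp]
    simp [hg.pos]
  obtain ⟨x, hx⟩ :=
    ((F.tendsto_atBot_of_leadingCoeff_nonpos hFdeg hFlc.le).eventually_lt_atBot 0).exists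
  simp only [F, eval_mul, eval_comp, eval_neg, eval_X] at hx
  have hsign : (0 : ℝ) ∈ uIcc (g.eval x) (g.eval (-x)) := by
    rcases mul_neg_iff.1 hx with h | h
    exacts [mem_uIcc.2 (.inr ⟨h.2.le, h.1.le⟩), mem_uIcc.2 (.inl ⟨h.1.le, h.2.le⟩)]
  obtain ⟨y, -, hy⟩ := intermediate_value_uIcc g.continuous.continuousOn hsign
  exact ⟨y, hy⟩

lemma eval_pos_of_forall_not_isRoot {f : ℝ[X]} (hdeg : 0 < f.degree) (hlc : 0 < f.leadingCoeff)
    (hf : ∀ x, ¬ f.IsRoot x) (x : ℝ) : 0 < f.eval x := by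
  obtain ⟨y, hy⟩ :=
    ((f.tendsto_atTop_of_leadingCoeff_nonneg hdeg hlc.le).eventually_gt_atTop 0).exists
  by_contra! hx
  obtain ⟨z, -, hz⟩ := intermediate_value_uIcc f.continuous.continuousOn
    (mem_uIcc.2 (.inl ⟨hx, hy.le⟩) : (0 : ℝ) ∈ uIcc (f.eval x) (f.eval y))
  exact hf z hz

lemma nonneg_on_Icc_of_mul {a b : ℝ} (hab : a < b) {Q g : ℝ[X]} (hQ : Q ≠ 0)
    (hQnn : ∀ x ∈ Icc a b, 0 ≤ Q.eval x) (hQg : ∀ x ∈ Icc a b, 0 ≤ (Q * g).eval x) :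
    ∀ x ∈ Icc a b, 0 ≤ g.eval x := by
  -- `g ≥ 0` away from the finitely many roots of `Q`, hence on all of `Icc a b` by continuity
  have hdense : Dense {x | Q.IsRoot x}ᶜ := (finite_setOfPred_isRoot hQ).countable.dense_compl ℝ
  have hsub : Ioo a b ∩ {x | Q.IsRoot x}ᶜ ⊆ {x | 0 ≤ g.eval x} := fun x ⟨hx, hroot⟩ =>
    nonneg_of_mul_nonneg_right (by simpa using hQg x (Ioo_subset_Icc_self hx))
      ((hQnn x (Ioo_subset_Icc_self hx)).lt_of_ne' hroot)
  intro x hx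
  rw [← closure_Ioo hab.ne] at hx
  exact closure_minimal hsub (isClosed_le continuous_const g.continuous)
    (closure_minimal (hdense.open_subset_closure_inter isOpen_Ioo) isClosed_closure hx)

lemma exists_lukacsRep_one_dvd_of_isRoot {a b r : ℝ} (hab : a < b) {h : ℝ[X]} (hh : h ≠ 0)
    (heven : Even h.natDegree) (hIoo : ∀ x ∈ Ioo a b, ¬ h.IsRoot x) (hroot : h.IsRoot r) :
    ∃ Q g, h = Q * g ∧ Q.natDegree = 2 ∧ LukacsRep a b 1 Q := by
  obtain ⟨g₁, rfl⟩ := dvd_iff_isRoot.2 hroot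
  have hodd : Odd g₁.natDegree := by
    rwa [natDegree_mul (X_sub_C_ne_zero r) (right_ne_zero_of_mul hh), natDegree_X_sub_C,
      add_comm, Nat.even_add_one, Nat.not_even_iff_odd] at heven
  obtain ⟨s, hs⟩ := exists_isRoot_of_odd_natDegree hodd
  obtain ⟨g, rfl⟩ := dvd_iff_isRoot.2 hs
  have hr : r ∉ Ioo a b := fun hr => hIoo r hr (by simp)
  have hs : s ∉ Ioo a b := fun hs => hIoo s hs (by simp)
  have hQ : ((X - C r) * (X - C s)).natDegree = 2 := by compute_degree!
  rcases lukacsRep_one_X_sub_C_mul_X_sub_C_or_neg hab hr hs with hQr | hQr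
  · exact ⟨_, g, by ring, hQ, hQr⟩
  · exact ⟨_, -g, by ring, by rwa [natDegree_neg], hQr⟩

lemma exists_lukacsRep_one_dvd_of_forall_not_isRoot {a b : ℝ} (hab : a < b) {h : ℝ[X]}
    (hdeg : 0 < h.natDegree) (hroots : ∀ x, ¬ h.IsRoot x) :
    ∃ Q g, h = Q * g ∧ Q.natDegree = 2 ∧ LukacsRep a b 1 Q := by
  obtain ⟨f, hmon, hirr, g, rfl⟩ :=
    h.exists_monic_irreducible_factor (not_isUnit_of_natDegree_pos h hdeg)
  have hf : ∀ x, ¬ f.IsRoot x := fun x hx => hroots x (by simp [hx.eq_zero])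
  have hf2 : f.natDegree = 2 := by
    have hf1 : f.natDegree ≠ 1 := fun h1 => hf (-f.coeff 0) (by rw [hmon.eq_X_add_C h1]; simp)
    have := hirr.natDegree_le_two
    have := hirr.natDegree_pos
    omega
  have hfpos := eval_pos_of_forall_not_isRoot (natDegree_pos_iff_degree_pos.1 (by omega))
    (by rw [hmon.leadingCoeff]; exact one_pos) hf
  exact ⟨f, g, rfl, hf2, lukacsRep_one_of_pos hab (natDegree_le_iff_degree_le.1 hf2.le)
    (fun x _ => (hfpos x).le) (hfpos a) (hfpos b)⟩

lemma exists_lukacsRep_one_dvd {a b : ℝ} (hab : a < b) {h : ℝ[X]}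
    (hpos : ∀ x ∈ Icc a b, 0 ≤ h.eval x) (heven : Even h.natDegree) (hdeg : 0 < h.natDegree) :
    ∃ Q g, h = Q * g ∧ Q.natDegree = 2 ∧ LukacsRep a b 1 Q := by
  have hh : h ≠ 0 := ne_zero_of_natDegree_gt hdeg
  by_cases hIoo : ∃ r ∈ Ioo a b, h.IsRoot r
  · obtain ⟨r, hr, hroot⟩ := hIoo
    obtain ⟨g, hg⟩ := sq_X_sub_C_dvd_of_nonneg_on_Icc hh hpos hr hroot
    exact ⟨_, g, hg, by rw [natDegree_pow, natDegree_X_sub_C], LukacsRep.sq_X_sub_C r⟩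
  push Not at hIoo
  by_cases hroots : ∃ r, h.IsRoot r
  · obtain ⟨r, hroot⟩ := hroots
    exact exists_lukacsRep_one_dvd_of_isRoot hab hh heven hIoo hroot
  push Not at hroots
  exact exists_lukacsRep_one_dvd_of_forall_not_isRoot hab hdeg hroots

open Polynomial in
theorem stmt_8 (h : Polynomial ℝ) (d₀ : ℕ) (hdeg : h.natDegree = 2 * d₀)
    (a b : ℝ) (hab : a < b) (hpos : ∀ x ∈ Set.Icc a b, 0 ≤ h.eval x) :
    ∃ p q : Polynomial ℝ, p.degree ≤ d₀ ∧ q.degree < d₀ ∧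
      h = p ^ 2 + (X - C a) * (C b - X) * q ^ 2 := by
  induction d₀ generalizing h with
  | zero =>
    rw [mul_zero] at hdeg
    rw [eq_C_of_natDegree_eq_zero hdeg] at hpos ⊢
    exact LukacsRep.C_of_nonneg (by simpa using hpos a ⟨le_rfl, hab.le⟩)
  | succ k ih =>
    obtain ⟨Q, g, rfl, hQ, hQrep⟩ :=
      exists_lukacsRep_one_dvd hab hpos (hdeg ▸ even_two_mul _) (by omega)
    have hQ0 : Q ≠ 0 := ne_zero_of_natDegree_gt (n := 0) (by omega)
    have hg0 : g ≠ 0 := by rintro rfl; simp at hdeg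
    have hgdeg : g.natDegree = 2 * k := by rw [natDegree_mul hQ0 hg0, hQ] at hdeg; omega
    have hgrep := ih g hgdeg (nonneg_on_Icc_of_mul hab hQ0 hQrep.nonneg hpos)
    exact add_comm 1 k ▸ hQrep.mul hgrep
end
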